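/- (Lemma 3.4) Fix an integer k ≥ 2, n ∈ ℕ, p ∈ [0,1], and an integer j, and form the random set 𝒜 ⊆ {0,1,…,n} by independent inclusion with probability p. Then every median m of the random variable Y*_{k,n}(j) (i.e., every real m with P(Y*_{k,n}(j) ≤ m) ≥ 1/2 and P(Y*_{k,n}(j) ≥ m) ≥ 1/2) satisfies |E[Y*_{k,n}(j)] − m| ≤ 40·√(k·E[Y*_{k,n}(j)]). -/

import Mathlib

open MeasureTheory Filter
open scoped ENNReal

/-- Bernoulli PMF on `Bool` with success probability `p` (clamped to `[0,1]`). -/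
noncomputable def bern (p : ℝ) : PMF Bool :=
  PMF.bernoulli (min (Real.toNNReal p) 1) (min_le_right _ _)

/-- The product Bernoulli measure on subsets of `{0, …, n}` (encoded as indicator
functions `Fin (n+1) → Bool`): each element is included independently w.p. `p`. -/
noncomputable def randSet (n : ℕ) (p : ℝ) : Measure (Fin (n + 1) → Bool) :=
  Measure.pi fun _ => (bern p).toMeasure

/-- The `k`-element subsets of the random set `ω` whose elements sum to `j`. -/
def repFinsets (n k j : ℕ) (ω : Fin (n + 1) → Bool) : Finset (Finset (Fin (n + 1))) :=
  Finset.univ.filter fun S => S.card = k ∧ (∑ i ∈ S, (i : ℕ)) = j ∧ ∀ i ∈ S, ω i = true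

/-- `Y n k j ω` : the number of `k`-element subsets of the random set `ω` summing to `j`. -/
def Y (n k j : ℕ) (ω : Fin (n + 1) → Bool) : ℕ := (repFinsets n k j ω).card

open scoped Classical in
/-- `Ystar n k j ω` : the maximum size of a collection of pairwise disjoint `k`-element
subsets of the random set `ω`, each of whose elements sum to `j`. -/
noncomputable def Ystar (n k j : ℕ) (ω : Fin (n + 1) → Bool) : ℕ :=
  (Finset.univ.filter fun 𝒞 : Finset (Finset (Fin (n + 1))) =>
    (∀ S ∈ 𝒞, S ∈ repFinsets n k j ω) ∧
      (𝒞 : Set (Finset (Fin (n + 1)))).Pairwise fun S T => Disjoint S T).sup Finset.card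

/-!
The map `ω ↦ Y*(ω)` on the biased cube `{0,1}^{n+1}` is monotone, changes by at most one when a
single coordinate is flipped, and the coordinates whose removal lowers it all lie in the union of a
maximum packing, which has `k · Y*(ω)` elements. By the Efron–Stein inequality these properties
give `Var Y* ≤ k · E Y*`, and Chebyshev's inequality places every median within `√(2 Var Y*)` of
the mean.
-/

open ProbabilityTheory Function

theorem mul_sq_add_mul_sq_eq {a b : ℝ} (hab : a + b = 1) (x y : ℝ) :
    a * x ^ 2 + b * y ^ 2 = (a * x + b * y) ^ 2 + a * b * (x - y) ^ 2 := by
  linear_combination (-(a * x ^ 2 + b * y ^ 2)) * hab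

theorem abs_integral_sub_le_sqrt_two_mul_variance {Ω : Type*} [MeasurableSpace Ω]
    {μ : Measure Ω} [IsFiniteMeasure μ] {X : Ω → ℝ} (hX : MemLp X 2 μ) {m : ℝ}
    (h₁ : 1 / 2 ≤ μ {ω | X ω ≤ m}) (h₂ : 1 / 2 ≤ μ {ω | m ≤ X ω}) :
    |μ[X] - m| ≤ √(2 * variance X μ) := by
  rcases (abs_nonneg (μ[X] - m)).eq_or_lt with h₀ | hpos
  · rw [← h₀]
    exact Real.sqrt_nonneg _
  refine Real.abs_le_sqrt ?_
  have hdev : 1 / 2 ≤ μ {ω | |μ[X] - m| ≤ |X ω - μ[X]|} := by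
    rcases le_total μ[X] m with hm | hm
    · refine h₂.trans (measure_mono fun ω (hω : m ≤ X ω) => ?_)
      change |μ[X] - m| ≤ |X ω - μ[X]|
      rw [abs_of_nonpos (by linarith), abs_of_nonneg (by linarith)]
      linarith
    · refine h₁.trans (measure_mono fun ω (hω : X ω ≤ m) => ?_)
      change |μ[X] - m| ≤ |X ω - μ[X]|
      rw [abs_of_nonneg (by linarith), abs_of_nonpos (by linarith)]
      linarith
  have hcheb := hdev.trans (meas_ge_le_variance_div_sq hX hpos)
  rw [show (1 / 2 : ℝ≥0∞) = ENNReal.ofReal (1 / 2) by rw [ENNReal.ofReal_div_of_pos two_pos]; simp,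
    ENNReal.ofReal_le_ofReal_iff (div_nonneg (variance_nonneg X μ) (sq_nonneg _)),
    le_div_iff₀ (by positivity), sq_abs] at hcheb
  linarith

section BoolCube

variable {ν : Measure Bool}

theorem integral_pi_eq_integral_sum_insertNth [IsFiniteMeasure ν] {N : ℕ} (i : Fin (N + 1))
    (F : (Fin (N + 1) → Bool) → ℝ) :
    ∫ ω, F ω ∂Measure.pi (fun _ => ν) =
      ∫ τ, ∑ b, ν.real {b} * F (i.insertNth b τ) ∂Measure.pi (fun _ => ν) := by
  rw [← (measurePreserving_piFinSuccAbove (fun _ => ν) i).symm.integral_comp',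
    integral_prod _ Integrable.of_finite, integral_fintype Integrable.of_finite,
    integral_finsetSum _ fun _ _ => Integrable.of_finite]
  simp only [smul_eq_mul, integral_const_mul]
  rfl

theorem integral_pi_eq_integral_cons [IsFiniteMeasure ν] {N : ℕ}
    (F : (Fin (N + 1) → Bool) → ℝ) :
    ∫ ω, F ω ∂Measure.pi (fun _ => ν) =
      ∫ τ, ν.real {true} * F (Fin.cons true τ) + ν.real {false} * F (Fin.cons false τ)
        ∂Measure.pi (fun _ => ν) := by
  simp only [integral_pi_eq_integral_sum_insertNth 0, Fintype.sum_bool, Fin.insertNth_zero']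

variable [IsProbabilityMeasure ν]

theorem measureReal_true_add_false : ν.real {true} + ν.real {false} = 1 := by
  rw [← Fintype.sum_bool (fun b => ν.real {b}), sum_measureReal_singleton, Finset.coe_univ,
    probReal_univ]

/-- The law of total variance, conditioning on all coordinates but the first. -/
theorem variance_pi_succ_eq {N : ℕ} (f : (Fin (N + 1) → Bool) → ℝ) :
    variance f (Measure.pi fun _ => ν) =
      variance
          (fun τ => ν.real {true} * f (Fin.cons true τ) + ν.real {false} * f (Fin.cons false τ))
          (Measure.pi fun _ => ν) +
        ∫ τ, ν.real {true} * ν.real {false} * (f (Fin.cons true τ) - f (Fin.cons false τ)) ^ 2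
          ∂Measure.pi (fun _ => ν) := by
  rw [variance_eq_sub MemLp.of_discrete, variance_eq_sub MemLp.of_discrete,
    integral_pi_eq_integral_cons f, sub_add_eq_add_sub,
    ← integral_add Integrable.of_finite Integrable.of_finite]
  congr 1
  rw [integral_pi_eq_integral_cons]
  exact integral_congr_ae
    (ae_of_all _ fun τ => mul_sq_add_mul_sq_eq measureReal_true_add_false _ _)

/-- **Efron–Stein inequality** on the biased Boolean cube. -/
theorem variance_le_sum_integral_sq_sub_update {N : ℕ} (f : (Fin N → Bool) → ℝ) :
    variance f (Measure.pi fun _ => ν) ≤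
      ∑ i, ∫ ω, ν.real {true} * ν.real {false} *
        (f (update ω i true) - f (update ω i false)) ^ 2 ∂Measure.pi (fun _ => ν) := by
  induction N with
  | zero =>
    rw [variance_eq_sub MemLp.of_discrete, Measure.pi_of_empty, integral_dirac, integral_dirac]
    simp
  | succ N ih =>
    set a := ν.real {true} with ha
    set b := ν.real {false} with hb
    have hab : a + b = 1 := measureReal_true_add_false
    have hab0 : 0 ≤ a * b := mul_nonneg measureReal_nonneg measureReal_nonneg
    let g (x : Bool) (τ : Fin N → Bool) := f (Fin.cons x τ)
    have hzero : ∫ ω, a * b * (f (update ω 0 true) - f (update ω 0 false)) ^ 2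
        ∂Measure.pi (fun _ => ν) =
          ∫ τ, a * b * (g true τ - g false τ) ^ 2 ∂Measure.pi (fun _ => ν) := by
      rw [integral_pi_eq_integral_cons]
      refine integral_congr_ae (ae_of_all _ fun τ => ?_)
      simp only [Fin.update_cons_zero, ← add_mul, ← ha, ← hb, hab, one_mul, g]
    have hsucc (i : Fin N) :
        ∫ τ, a * b * ((a * g true (update τ i true) + b * g false (update τ i true)) -
            (a * g true (update τ i false) + b * g false (update τ i false))) ^ 2
            ∂Measure.pi (fun _ => ν) ≤
          ∫ ω, a * b * (f (update ω i.succ true) - f (update ω i.succ false)) ^ 2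
            ∂Measure.pi (fun _ => ν) := by
      rw [integral_pi_eq_integral_cons]
      refine integral_mono Integrable.of_finite Integrable.of_finite fun τ => ?_
      simp only [← Fin.cons_update, ← ha, ← hb]
      set x := g true (update τ i true) - g true (update τ i false)
      set y := g false (update τ i true) - g false (update τ i false)
      calc _ = a * b * (a * x + b * y) ^ 2 := by ring
        _ ≤ a * b * (a * x ^ 2 + b * y ^ 2) := by
          rw [mul_sq_add_mul_sq_eq hab]
          exact mul_le_mul_of_nonneg_left
            (le_add_of_nonneg_right (mul_nonneg hab0 (sq_nonneg _))) hab0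
        _ = _ := by ring
    calc variance f (Measure.pi fun _ => ν)
        = _ := variance_pi_succ_eq f
      _ ≤ _ := add_le_add_left (ih _) _
      _ ≤ _ := add_le_add_left (Finset.sum_le_sum fun i _ => hsucc i) _
      _ = _ := by rw [Fin.sum_univ_succ, hzero, add_comm]

theorem integral_sq_sub_update_le {N : ℕ} {f : (Fin N → Bool) → ℝ}
    (h_mono : ∀ ω i, f (update ω i false) ≤ f (update ω i true))
    (h_lip : ∀ ω i, f (update ω i true) ≤ f (update ω i false) + 1) (i : Fin N) :
    ∫ ω, ν.real {true} * ν.real {false} * (f (update ω i true) - f (update ω i false)) ^ 2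
        ∂Measure.pi (fun _ => ν) ≤
      ∫ ω, (f ω - f (update ω i false)) ∂Measure.pi (fun _ => ν) := by
  cases N with
  | zero => exact i.elim0
  | succ N =>
    rw [integral_pi_eq_integral_sum_insertNth i, integral_pi_eq_integral_sum_insertNth i]
    -- with `τ` fixed, the increment `D` at coordinate `i` lies in `[0, 1]`, so `ν{false} D² ≤ D`
    refine integral_mono Integrable.of_finite Integrable.of_finite fun τ => ?_
    have ha : 0 ≤ ν.real {true} := measureReal_nonneg
    have hb : ν.real {false} ≤ 1 := by linarith [measureReal_true_add_false (ν := ν), ha]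
    have hD₀ := sub_nonneg.2 (h_mono (i.insertNth false τ) i)
    have hD₁ := sub_le_iff_le_add'.2 (h_lip (i.insertNth false τ) i)
    simp only [Fintype.sum_bool, Fin.update_insertNth, sub_self, mul_zero, add_zero] at hD₀ hD₁ ⊢
    set D := f (i.insertNth true τ) - f (i.insertNth false τ)
    calc ν.real {true} * (ν.real {true} * ν.real {false} * D ^ 2) +
          ν.real {false} * (ν.real {true} * ν.real {false} * D ^ 2)
        = ν.real {true} * (ν.real {false} * D) * D := by
          linear_combination
            (ν.real {true} * ν.real {false} * D ^ 2) * measureReal_true_add_false (ν := ν)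
      _ ≤ ν.real {true} * 1 * D := by gcongr; exact mul_le_one₀ hb hD₀ hD₁
      _ = ν.real {true} * D := by ring

theorem variance_le_mul_integral_of_self_bounding {N : ℕ} {f : (Fin N → Bool) → ℝ} {c : ℝ}
    (h_mono : ∀ ω i, f (update ω i false) ≤ f (update ω i true))
    (h_lip : ∀ ω i, f (update ω i true) ≤ f (update ω i false) + 1)
    (h_sum : ∀ ω, ∑ i, (f ω - f (update ω i false)) ≤ c * f ω) :
    variance f (Measure.pi fun _ => ν) ≤ c * ∫ ω, f ω ∂Measure.pi (fun _ => ν) :=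
  calc variance f (Measure.pi fun _ => ν)
      _ ≤ _ := variance_le_sum_integral_sq_sub_update f
      _ ≤ ∑ i, ∫ ω, (f ω - f (update ω i false)) ∂Measure.pi (fun _ => ν) :=
        Finset.sum_le_sum fun i _ => integral_sq_sub_update_le h_mono h_lip i
      _ = ∫ ω, ∑ i, (f ω - f (update ω i false)) ∂Measure.pi (fun _ => ν) :=
        (integral_finsetSum _ fun _ _ => Integrable.of_finite).symm
      _ ≤ ∫ ω, c * f ω ∂Measure.pi (fun _ => ν) :=
        integral_mono Integrable.of_finite Integrable.of_finite h_sum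
      _ = c * ∫ ω, f ω ∂Measure.pi (fun _ => ν) := integral_const_mul c _

end BoolCube

section Packing

variable {n k j : ℕ} {ω ω' : Fin (n + 1) → Bool} {𝒞 : Finset (Finset (Fin (n + 1)))}

def IsPacking (n k j : ℕ) (ω : Fin (n + 1) → Bool) (𝒞 : Finset (Finset (Fin (n + 1)))) : Prop :=
  (∀ S ∈ 𝒞, S ∈ repFinsets n k j ω) ∧
    (𝒞 : Set (Finset (Fin (n + 1)))).Pairwise fun S T => Disjoint S T

theorem mem_repFinsets {S : Finset (Fin (n + 1))} :
    S ∈ repFinsets n k j ω ↔ S.card = k ∧ ∑ i ∈ S, (i : ℕ) = j ∧ ∀ i ∈ S, ω i = true := by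
  simp [repFinsets]

open scoped Classical in
theorem Ystar_eq_sup_card :
    Ystar n k j ω = (Finset.univ.filter (IsPacking n k j ω)).sup Finset.card := by
  unfold Ystar IsPacking
  congr

theorem IsPacking.card_le_Ystar (h : IsPacking n k j ω 𝒞) : 𝒞.card ≤ Ystar n k j ω := by
  classical
  exact Ystar_eq_sup_card ▸ Finset.le_sup (Finset.mem_filter.2 ⟨Finset.mem_univ _, h⟩)

theorem exists_isPacking_card_eq_Ystar (n k j : ℕ) (ω : Fin (n + 1) → Bool) :
    ∃ 𝒞, IsPacking n k j ω 𝒞 ∧ 𝒞.card = Ystar n k j ω := by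
  classical
  have hne : (Finset.univ.filter (IsPacking n k j ω)).Nonempty :=
    ⟨∅, Finset.mem_filter.2 ⟨Finset.mem_univ _, by simp [IsPacking]⟩⟩
  obtain ⟨𝒞, h𝒞, hsup⟩ := Finset.exists_mem_eq_sup _ hne Finset.card
  exact ⟨𝒞, (Finset.mem_filter.1 h𝒞).2, (Ystar_eq_sup_card.trans hsup).symm⟩

theorem IsPacking.of_forall_mem (h : IsPacking n k j ω 𝒞)
    (h' : ∀ S ∈ 𝒞, ∀ i ∈ S, ω' i = true) : IsPacking n k j ω' 𝒞 := by
  refine ⟨fun S hS => ?_, h.2⟩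
  obtain ⟨hcard, hsum, -⟩ := mem_repFinsets.1 (h.1 S hS)
  exact mem_repFinsets.2 ⟨hcard, hsum, h' S hS⟩

theorem IsPacking.subset (h : IsPacking n k j ω 𝒞) {𝒟 : Finset (Finset (Fin (n + 1)))}
    (h𝒟 : 𝒟 ⊆ 𝒞) : IsPacking n k j ω 𝒟 :=
  ⟨fun S hS => h.1 S (h𝒟 hS), h.2.mono h𝒟⟩

theorem IsPacking.update_false (h : IsPacking n k j ω 𝒞) {i : Fin (n + 1)}
    (hi : ∀ S ∈ 𝒞, i ∉ S) : IsPacking n k j (update ω i false) 𝒞 :=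
  h.of_forall_mem fun S hS i' hi' => by
    rw [update_of_ne (ne_of_mem_of_not_mem hi' (hi S hS))]
    exact (mem_repFinsets.1 (h.1 S hS)).2.2 i' hi'

theorem Ystar_mono : Monotone (Ystar n k j) := by
  intro ω ω' hle
  obtain ⟨𝒞, h𝒞, hcard⟩ := exists_isPacking_card_eq_Ystar n k j ω
  refine hcard ▸ (h𝒞.of_forall_mem fun S hS i hi => ?_).card_le_Ystar
  exact Bool.le_iff_imp.1 (hle i) ((mem_repFinsets.1 (h𝒞.1 S hS)).2.2 i hi)

theorem Ystar_update_true_le (ω : Fin (n + 1) → Bool) (i : Fin (n + 1)) :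
    Ystar n k j (update ω i true) ≤ Ystar n k j (update ω i false) + 1 := by
  classical
  obtain ⟨𝒞, h𝒞, hcard⟩ := exists_isPacking_card_eq_Ystar n k j (update ω i true)
  have hthrough : (𝒞.filter (i ∈ ·)).card ≤ 1 :=
    Finset.card_le_one.2 fun S hS T hT => by
      rw [Finset.mem_filter] at hS hT
      by_contra hST
      exact Finset.disjoint_left.1 (h𝒞.2 hS.1 hT.1 hST) hS.2 hT.2
  have havoid : (𝒞.filter (i ∉ ·)).card ≤ Ystar n k j (update ω i false) := by
    have := ((h𝒞.subset (Finset.filter_subset (i ∉ ·) 𝒞)).update_false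
      fun S hS => (Finset.mem_filter.1 hS).2).card_le_Ystar
    rwa [update_idem] at this
  have hsplit := Finset.card_filter_add_card_filter_not (s := 𝒞) (i ∈ ·)
  omega

theorem sum_Ystar_sub_update_false_le (ω : Fin (n + 1) → Bool) :
    ∑ i, ((Ystar n k j ω : ℝ) - Ystar n k j (update ω i false)) ≤ k * Ystar n k j ω := by
  classical
  obtain ⟨𝒞, h𝒞, hcard⟩ := exists_isPacking_card_eq_Ystar n k j ω
  set T := 𝒞.biUnion id with hTdef
  have hT : T.card = Ystar n k j ω * k := by
    rw [hTdef, Finset.card_biUnion (t := id) fun S hS S' hS' hSS' => h𝒞.2 hS hS' hSS', ← hcard]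
    exact Finset.sum_const_nat fun S hS => (mem_repFinsets.1 (h𝒞.1 S hS)).1
  have hterm (i : Fin (n + 1)) :
      (Ystar n k j ω : ℝ) - Ystar n k j (update ω i false) ≤ if i ∈ T then 1 else 0 := by
    split_ifs with hiT
    · have hup : Ystar n k j ω ≤ Ystar n k j (update ω i true) :=
        Ystar_mono (le_update_self_iff.2 le_top)
      have := Ystar_update_true_le (k := k) (j := j) ω i
      rw [sub_le_iff_le_add']
      exact_mod_cast hup.trans this
    · have := (h𝒞.update_false fun S hS hiS =>
        hiT (Finset.mem_biUnion.2 ⟨S, hS, hiS⟩)).card_le_Ystar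
      rw [sub_nonpos]
      exact_mod_cast hcard ▸ this
  calc ∑ i, ((Ystar n k j ω : ℝ) - Ystar n k j (update ω i false))
      ≤ ∑ i, if i ∈ T then (1 : ℝ) else 0 := Finset.sum_le_sum fun i _ => hterm i
    _ = k * Ystar n k j ω := by
      rw [Finset.sum_ite_mem, Finset.univ_inter, Finset.sum_const, nsmul_one, hT]
      push_cast
      ring

end Packing

theorem variance_Ystar_le (ν : Measure Bool) [IsProbabilityMeasure ν] (n k j : ℕ) :
    variance (fun ω => (Ystar n k j ω : ℝ)) (Measure.pi fun _ => ν) ≤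
      k * ∫ ω, (Ystar n k j ω : ℝ) ∂Measure.pi (fun _ => ν) :=
  variance_le_mul_integral_of_self_bounding
    (fun ω i => Nat.cast_le.2 (Ystar_mono (update_le_update_iff'.2 (Bool.false_le true))))
    (fun ω i => by exact_mod_cast Ystar_update_true_le ω i)
    sum_Ystar_sub_update_false_le

instance (n : ℕ) (p : ℝ) : IsProbabilityMeasure (randSet n p) := by
  unfold randSet
  infer_instance

theorem median_close_to_mean_general (k : ℕ) (n : ℕ) (p : ℝ) (j : ℕ) :
    ∀ m : ℝ,
      (1 : ℝ≥0∞) / 2 ≤ randSet n p {ω | (Ystar n k j ω : ℝ) ≤ m} →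
      (1 : ℝ≥0∞) / 2 ≤ randSet n p {ω | m ≤ (Ystar n k j ω : ℝ)} →
      |(∫ ω, (Ystar n k j ω : ℝ) ∂ randSet n p) - m| ≤
        40 * Real.sqrt (k * ∫ ω, (Ystar n k j ω : ℝ) ∂ randSet n p) := by
  intro m h₁ h₂
  have hvar := variance_Ystar_le (bern p).toMeasure n k j
  calc |(∫ ω, (Ystar n k j ω : ℝ) ∂ randSet n p) - m|
      ≤ √(2 * variance (fun ω => (Ystar n k j ω : ℝ)) (randSet n p)) :=
        abs_integral_sub_le_sqrt_two_mul_variance MemLp.of_discrete h₁ h₂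
    _ ≤ √2 * √(k * ∫ ω, (Ystar n k j ω : ℝ) ∂ randSet n p) := by
        rw [← Real.sqrt_mul zero_le_two]
        exact Real.sqrt_le_sqrt (by unfold randSet; linarith)
    _ ≤ 40 * √(k * ∫ ω, (Ystar n k j ω : ℝ) ∂ randSet n p) := by
        gcongr
        rw [Real.sqrt_le_left (by norm_num)]
        norm_num

/-- Lemma 3.4. For fixed `k ≥ 2`, `n`, `p ∈ [0,1]` and `j`, every median
`m` of `Y*_{k,n}(j)` satisfies `|E[Y*_{k,n}(j)] − m| ≤ 40·√(k·E[Y*_{k,n}(j)])`. -/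
theorem median_close_to_mean (k : ℕ) (hk : 2 ≤ k) (n : ℕ) (p : ℝ)
    (hp0 : 0 ≤ p) (hp1 : p ≤ 1) (j : ℕ) :
    ∀ m : ℝ,
      (1 : ℝ≥0∞) / 2 ≤ randSet n p {ω | (Ystar n k j ω : ℝ) ≤ m} →
      (1 : ℝ≥0∞) / 2 ≤ randSet n p {ω | m ≤ (Ystar n k j ω : ℝ)} →
      |(∫ ω, (Ystar n k j ω : ℝ) ∂ randSet n p) - m| ≤
        40 * Real.sqrt (k * ∫ ω, (Ystar n k j ω : ℝ) ∂ randSet n p) :=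
  median_close_to_mean_general k n p j
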